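/- Split-exactness (covariant case): Let F be an additive, homotopy invariant, half-exact covariant functor from C*-algebras to abelian groups. Then F is split-exact: for every short exact sequence A0 →ι A1 →π A2 of C*-algebras which splits, i.e., admits a *-homomorphism s : A2 → A1 with π∘s = id_{A2}, the sequence 0 → F(A0) →F(ι) F(A1) →F(π) F(A2) → 0 is exact (F(ι) is injective, F(π) is surjective with range F(ι) = ker F(π)), and F(s) is a splitting of it. -/

import Mathlib

/-!
Formalization preamble: cones, suspensions, mapping cones of (non-unital) C*-algebras,
their concrete models inside algebras of continuous functions, and functors from
C*-algebras to abelian groups.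
-/

set_option maxHeartbeats 1600000
set_option synthInstance.maxHeartbeats 800000

open scoped unitInterval CStarAlgebra

noncomputable section

namespace CStarPaper

variable {A B : Type*} [NonUnitalCStarAlgebra A] [NonUnitalCStarAlgebra B]

/-- The flip of a continuous function on the square `[0,1]²`. -/
def flip2 {A : Type*} [NonUnitalCStarAlgebra A] (f : C(I × I, A)) : C(I × I, A) :=
  f.comp ⟨Prod.swap, continuous_swap⟩

@[simp] lemma flip2_apply (f : C(I × I, A)) (s t : I) : flip2 f (s, t) = f (t, s) := rfl

/-- The cone `CA = {f ∈ C([0,1],A) : f(0) = 0}` of a C*-algebra `A`. -/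
def cone (A : Type*) [NonUnitalCStarAlgebra A] : NonUnitalStarSubalgebra ℂ C(I, A) where
  carrier := {f | f 0 = 0}
  add_mem' := by intro f g hf hg; simp_all [Set.mem_setOf_eq]
  zero_mem' := by simp [Set.mem_setOf_eq]
  mul_mem' := by intro f g hf hg; simp_all [Set.mem_setOf_eq]
  smul_mem' := by intro c f hf; simp_all [Set.mem_setOf_eq]
  star_mem' := by intro f hf; simp_all [Set.mem_setOf_eq, map_star]

instance cone.isClosed (A : Type*) [NonUnitalCStarAlgebra A] :
    IsClosed ((cone A : Set C(I, A))) :=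
  isClosed_eq (continuous_eval_const 0) continuous_const

/-- The suspension `SA = {f ∈ C([0,1],A) : f(0) = f(1) = 0}` of a C*-algebra `A`. -/
def susp (A : Type*) [NonUnitalCStarAlgebra A] : NonUnitalStarSubalgebra ℂ C(I, A) where
  carrier := {f | f 0 = 0 ∧ f 1 = 0}
  add_mem' := by intro f g hf hg; simp_all [Set.mem_setOf_eq]
  zero_mem' := by simp [Set.mem_setOf_eq]
  mul_mem' := by intro f g hf hg; simp_all [Set.mem_setOf_eq]
  smul_mem' := by intro c f hf; simp_all [Set.mem_setOf_eq]
  star_mem' := by intro f hf; simp_all [Set.mem_setOf_eq, map_star]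

instance susp.isClosed (A : Type*) [NonUnitalCStarAlgebra A] :
    IsClosed ((susp A : Set C(I, A))) := by
  have h : (susp A : Set C(I, A)) = {f | f 0 = 0} ∩ {f | f 1 = 0} := rfl
  rw [h]
  exact (isClosed_eq (continuous_eval_const 0) continuous_const).inter
    (isClosed_eq (continuous_eval_const 1) continuous_const)

/-- The mapping cone `C_φ = {(x,y) ∈ A ⊕ CB : φ(x) = y(1)}` of `φ : A → B`. -/
def mapCone (φ : A →⋆ₙₐ[ℂ] B) : NonUnitalStarSubalgebra ℂ (A × C(I, B)) where
  carrier := {p | p.2 0 = 0 ∧ φ p.1 = p.2 1}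
  add_mem' := by intro p q hp hq; simp_all [Set.mem_setOf_eq]
  zero_mem' := by simp [Set.mem_setOf_eq]
  mul_mem' := by intro p q hp hq; simp_all [Set.mem_setOf_eq]
  smul_mem' := by intro c p hp; simp_all [Set.mem_setOf_eq]
  star_mem' := by intro p hp; simp_all [Set.mem_setOf_eq, map_star]

instance mapCone.isClosed (φ : A →⋆ₙₐ[ℂ] B) :
    IsClosed ((mapCone φ : Set (A × C(I, B)))) := by
  have h : (mapCone φ : Set (A × C(I, B)))
      = {p : A × C(I, B) | p.2 0 = 0} ∩ {p : A × C(I, B) | φ p.1 = p.2 1} := rfl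
  rw [h]
  exact (isClosed_eq ((continuous_eval_const 0).comp continuous_snd) continuous_const).inter
    (isClosed_eq ((map_continuous φ).comp continuous_fst)
      ((continuous_eval_const 1).comp continuous_snd))

/-- The canonical inclusion `SA → CA`. -/
def suspIncl (A : Type*) [NonUnitalCStarAlgebra A] : ↥(susp A) →⋆ₙₐ[ℂ] ↥(cone A) where
  toFun f := ⟨(f : C(I, A)), f.2.1⟩
  map_smul' _ _ := rfl
  map_zero' := rfl
  map_add' _ _ := rfl
  map_mul' _ _ := rfl
  map_star' _ := rfl

/-- Evaluation at `1`, as a *-homomorphism `CA → A`. -/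
def coneEval (A : Type*) [NonUnitalCStarAlgebra A] : ↥(cone A) →⋆ₙₐ[ℂ] A where
  toFun f := (f : C(I, A)) 1
  map_smul' _ _ := rfl
  map_zero' := rfl
  map_add' _ _ := rfl
  map_mul' _ _ := rfl
  map_star' _ := rfl

/-- The canonical projection `π_mc : C_φ → A`, `(x,y) ↦ x`. -/
def mapConeProj (φ : A →⋆ₙₐ[ℂ] B) : ↥(mapCone φ) →⋆ₙₐ[ℂ] A where
  toFun p := (p : A × C(I, B)).1
  map_smul' _ _ := rfl
  map_zero' := rfl
  map_add' _ _ := rfl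
  map_mul' _ _ := rfl
  map_star' _ := rfl

/-- The projection `C_φ → CB`, `(x,y) ↦ y`. -/
def mapConeSnd (φ : A →⋆ₙₐ[ℂ] B) : ↥(mapCone φ) →⋆ₙₐ[ℂ] ↥(cone B) where
  toFun p := ⟨(p : A × C(I, B)).2, p.2.1⟩
  map_smul' _ _ := rfl
  map_zero' := rfl
  map_add' _ _ := rfl
  map_mul' _ _ := rfl
  map_star' _ := rfl

/-- The canonical inclusion `ι_mc : SB → C_φ`, `g ↦ (0,g)`. -/
def mapConeIncl (φ : A →⋆ₙₐ[ℂ] B) : ↥(susp B) →⋆ₙₐ[ℂ] ↥(mapCone φ) where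
  toFun g := ⟨(0, (g : C(I, B))), ⟨g.2.1, by simp [g.2.2]⟩⟩
  map_smul' c g := Subtype.ext (by simp [Prod.ext_iff])
  map_zero' := Subtype.ext (by simp [Prod.ext_iff])
  map_add' g h := Subtype.ext (by simp [Prod.ext_iff])
  map_mul' g h := Subtype.ext (by simp [Prod.ext_iff])
  map_star' g := Subtype.ext (by simp [Prod.ext_iff])

/-- The concrete model of the suspension `S(C_φ)` of a mapping cone, inside
`C([0,1],A) × C([0,1]²,B)`. -/
def suspMapConeModel (φ : A →⋆ₙₐ[ℂ] B) :
    NonUnitalStarSubalgebra ℂ (C(I, A) × C(I × I, B)) where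
  carrier := {p | p.1 0 = 0 ∧ p.1 1 = 0 ∧ (∀ t, p.2 (0, t) = 0) ∧ (∀ t, p.2 (1, t) = 0) ∧
    (∀ s, p.2 (s, 0) = 0) ∧ ∀ s, φ (p.1 s) = p.2 (s, 1)}
  add_mem' := by
    rintro p q ⟨h1, h2, h3, h4, h5, h6⟩ ⟨g1, g2, g3, g4, g5, g6⟩
    exact ⟨by simp [h1, g1], by simp [h2, g2], fun t => by simp [h3 t, g3 t],
      fun t => by simp [h4 t, g4 t], fun s => by simp [h5 s, g5 s],
      fun s => by simp [h6 s, g6 s]⟩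
  zero_mem' := ⟨by simp, by simp, fun t => by simp, fun t => by simp, fun s => by simp,
    fun s => by simp⟩
  mul_mem' := by
    rintro p q ⟨h1, h2, h3, h4, h5, h6⟩ ⟨g1, g2, g3, g4, g5, g6⟩
    exact ⟨by simp [h1, g1], by simp [h2, g2], fun t => by simp [h3 t, g3 t],
      fun t => by simp [h4 t, g4 t], fun s => by simp [h5 s, g5 s],
      fun s => by simp [h6 s, g6 s]⟩
  smul_mem' := by
    rintro c p ⟨h1, h2, h3, h4, h5, h6⟩
    exact ⟨by simp [h1], by simp [h2], fun t => by simp [h3 t],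
      fun t => by simp [h4 t], fun s => by simp [h5 s], fun s => by simp [h6 s]⟩
  star_mem' := by
    rintro p ⟨h1, h2, h3, h4, h5, h6⟩
    exact ⟨by simp [h1], by simp [h2], fun t => by simp [h3 t],
      fun t => by simp [h4 t], fun s => by simp [h5 s], fun s => by simp [map_star, h6 s]⟩

/-- The concrete model of the mapping cone `C_{Sφ}` of the suspension of `φ`, inside
`C([0,1],A) × C([0,1]²,B)`. -/
def mapConeSuspModel (φ : A →⋆ₙₐ[ℂ] B) :
    NonUnitalStarSubalgebra ℂ (C(I, A) × C(I × I, B)) where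
  carrier := {p | p.1 0 = 0 ∧ p.1 1 = 0 ∧ (∀ t, p.2 (0, t) = 0) ∧ (∀ s, p.2 (s, 0) = 0) ∧
    (∀ s, p.2 (s, 1) = 0) ∧ ∀ t, φ (p.1 t) = p.2 (1, t)}
  add_mem' := by
    rintro p q ⟨h1, h2, h3, h4, h5, h6⟩ ⟨g1, g2, g3, g4, g5, g6⟩
    exact ⟨by simp [h1, g1], by simp [h2, g2], fun t => by simp [h3 t, g3 t],
      fun s => by simp [h4 s, g4 s], fun s => by simp [h5 s, g5 s],
      fun t => by simp [h6 t, g6 t]⟩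
  zero_mem' := ⟨by simp, by simp, fun t => by simp, fun s => by simp, fun s => by simp,
    fun t => by simp⟩
  mul_mem' := by
    rintro p q ⟨h1, h2, h3, h4, h5, h6⟩ ⟨g1, g2, g3, g4, g5, g6⟩
    exact ⟨by simp [h1, g1], by simp [h2, g2], fun t => by simp [h3 t, g3 t],
      fun s => by simp [h4 s, g4 s], fun s => by simp [h5 s, g5 s],
      fun t => by simp [h6 t, g6 t]⟩
  smul_mem' := by
    rintro c p ⟨h1, h2, h3, h4, h5, h6⟩
    exact ⟨by simp [h1], by simp [h2], fun t => by simp [h3 t],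
      fun s => by simp [h4 s], fun s => by simp [h5 s], fun t => by simp [h6 t]⟩
  star_mem' := by
    rintro p ⟨h1, h2, h3, h4, h5, h6⟩
    exact ⟨by simp [h1], by simp [h2], fun t => by simp [h3 t],
      fun s => by simp [h4 s], fun s => by simp [h5 s], fun t => by simp [map_star, h6 t]⟩

/-- The concrete model of the cone `C(C_φ)` of a mapping cone, inside
`C([0,1],A) × C([0,1]²,B)`. -/
def coneMapConeModel (φ : A →⋆ₙₐ[ℂ] B) :
    NonUnitalStarSubalgebra ℂ (C(I, A) × C(I × I, B)) where
  carrier := {p | p.1 0 = 0 ∧ (∀ t, p.2 (0, t) = 0) ∧ (∀ s, p.2 (s, 0) = 0) ∧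
    ∀ s, φ (p.1 s) = p.2 (s, 1)}
  add_mem' := by
    rintro p q ⟨h1, h3, h5, h6⟩ ⟨g1, g3, g5, g6⟩
    exact ⟨by simp [h1, g1], fun t => by simp [h3 t, g3 t], fun s => by simp [h5 s, g5 s],
      fun s => by simp [h6 s, g6 s]⟩
  zero_mem' := ⟨by simp, fun t => by simp, fun s => by simp, fun s => by simp⟩
  mul_mem' := by
    rintro p q ⟨h1, h3, h5, h6⟩ ⟨g1, g3, g5, g6⟩
    exact ⟨by simp [h1, g1], fun t => by simp [h3 t, g3 t], fun s => by simp [h5 s, g5 s],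
      fun s => by simp [h6 s, g6 s]⟩
  smul_mem' := by
    rintro c p ⟨h1, h3, h5, h6⟩
    exact ⟨by simp [h1], fun t => by simp [h3 t], fun s => by simp [h5 s],
      fun s => by simp [h6 s]⟩
  star_mem' := by
    rintro p ⟨h1, h3, h5, h6⟩
    exact ⟨by simp [h1], fun t => by simp [h3 t], fun s => by simp [h5 s],
      fun s => by simp [map_star, h6 s]⟩

/-- The concrete model of the mapping cone `C_{Cφ}` of the cone of `φ`, inside
`C([0,1],A) × C([0,1]²,B)`. -/
def mapConeConeModel (φ : A →⋆ₙₐ[ℂ] B) :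
    NonUnitalStarSubalgebra ℂ (C(I, A) × C(I × I, B)) where
  carrier := {p | p.1 0 = 0 ∧ (∀ t, p.2 (0, t) = 0) ∧ (∀ s, p.2 (s, 0) = 0) ∧
    ∀ t, φ (p.1 t) = p.2 (1, t)}
  add_mem' := by
    rintro p q ⟨h1, h3, h5, h6⟩ ⟨g1, g3, g5, g6⟩
    exact ⟨by simp [h1, g1], fun t => by simp [h3 t, g3 t], fun s => by simp [h5 s, g5 s],
      fun t => by simp [h6 t, g6 t]⟩
  zero_mem' := ⟨by simp, fun t => by simp, fun s => by simp, fun t => by simp⟩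
  mul_mem' := by
    rintro p q ⟨h1, h3, h5, h6⟩ ⟨g1, g3, g5, g6⟩
    exact ⟨by simp [h1, g1], fun t => by simp [h3 t, g3 t], fun s => by simp [h5 s, g5 s],
      fun t => by simp [h6 t, g6 t]⟩
  smul_mem' := by
    rintro c p ⟨h1, h3, h5, h6⟩
    exact ⟨by simp [h1], fun t => by simp [h3 t], fun s => by simp [h5 s],
      fun t => by simp [h6 t]⟩
  star_mem' := by
    rintro p ⟨h1, h3, h5, h6⟩
    exact ⟨by simp [h1], fun t => by simp [h3 t], fun s => by simp [h5 s],
      fun t => by simp [map_star, h6 t]⟩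

variable {X Y₁ Y₂ Z : Type*} [NonUnitalCStarAlgebra X] [NonUnitalCStarAlgebra Y₁]
  [NonUnitalCStarAlgebra Y₂] [NonUnitalCStarAlgebra Z]

/-- The canonical concrete realization of the double mapping cone associated to a commuting
square `ψ₁ ∘ φ₁ = ψ₂ ∘ φ₂`, inside `X × C([0,1],Y₁) × C([0,1],Y₂) × C([0,1]²,Z)`. -/
def dblCone (φ₁ : X →⋆ₙₐ[ℂ] Y₁) (φ₂ : X →⋆ₙₐ[ℂ] Y₂) (ψ₁ : Y₁ →⋆ₙₐ[ℂ] Z) (ψ₂ : Y₂ →⋆ₙₐ[ℂ] Z) :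
    NonUnitalStarSubalgebra ℂ (X × C(I, Y₁) × C(I, Y₂) × C(I × I, Z)) where
  carrier := {p | p.2.1 0 = 0 ∧ p.2.2.1 0 = 0 ∧ (∀ t, p.2.2.2 (0, t) = 0) ∧
    (∀ s, p.2.2.2 (s, 0) = 0) ∧ φ₁ p.1 = p.2.1 1 ∧ φ₂ p.1 = p.2.2.1 1 ∧
    (∀ t, ψ₁ (p.2.1 t) = p.2.2.2 (1, t)) ∧ ∀ s, ψ₂ (p.2.2.1 s) = p.2.2.2 (s, 1)}
  add_mem' := by
    rintro p q ⟨h1, h2, h3, h4, h5, h6, h7, h8⟩ ⟨g1, g2, g3, g4, g5, g6, g7, g8⟩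
    exact ⟨by simp [h1, g1], by simp [h2, g2], fun t => by simp [h3 t, g3 t],
      fun s => by simp [h4 s, g4 s], by simp [h5, g5], by simp [h6, g6],
      fun t => by simp [h7 t, g7 t], fun s => by simp [h8 s, g8 s]⟩
  zero_mem' := ⟨by simp, by simp, fun t => by simp, fun s => by simp, by simp, by simp,
    fun t => by simp, fun s => by simp⟩
  mul_mem' := by
    rintro p q ⟨h1, h2, h3, h4, h5, h6, h7, h8⟩ ⟨g1, g2, g3, g4, g5, g6, g7, g8⟩
    exact ⟨by simp [h1, g1], by simp [h2, g2], fun t => by simp [h3 t, g3 t],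
      fun s => by simp [h4 s, g4 s], by simp [h5, g5], by simp [h6, g6],
      fun t => by simp [h7 t, g7 t], fun s => by simp [h8 s, g8 s]⟩
  smul_mem' := by
    rintro c p ⟨h1, h2, h3, h4, h5, h6, h7, h8⟩
    exact ⟨by simp [h1], by simp [h2], fun t => by simp [h3 t], fun s => by simp [h4 s],
      by simp [h5], by simp [h6], fun t => by simp [h7 t], fun s => by simp [h8 s]⟩
  star_mem' := by
    rintro p ⟨h1, h2, h3, h4, h5, h6, h7, h8⟩
    exact ⟨by simp [h1], by simp [h2], fun t => by simp [h3 t], fun s => by simp [h4 s],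
      by simp [map_star, h5], by simp [map_star, h6], fun t => by simp [map_star, h7 t],
      fun s => by simp [map_star, h8 s]⟩

/-- The pullback of two *-homomorphisms with common codomain, as a *-subalgebra of the
direct sum. -/
def pullbackAlg {B₂ C₁ C₂ : Type*} [NonUnitalCStarAlgebra B₂] [NonUnitalCStarAlgebra C₁]
    [NonUnitalCStarAlgebra C₂] (v : B₂ →⋆ₙₐ[ℂ] C₂) (w : C₁ →⋆ₙₐ[ℂ] C₂) :
    NonUnitalStarSubalgebra ℂ (B₂ × C₁) where
  carrier := {p | v p.1 = w p.2}
  add_mem' := by intro p q hp hq; simp_all [Set.mem_setOf_eq]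
  zero_mem' := by simp [Set.mem_setOf_eq]
  mul_mem' := by intro p q hp hq; simp_all [Set.mem_setOf_eq]
  smul_mem' := by intro c p hp; simp_all [Set.mem_setOf_eq]
  star_mem' := by intro p hp; simp_all [Set.mem_setOf_eq, map_star]

/-- `ι, π` form a short exact sequence. -/
def IsShortExact {A₀ A₁ A₂ : Type*}
    [NonUnitalNonAssocSemiring A₀] [NonUnitalNonAssocSemiring A₁] [NonUnitalNonAssocSemiring A₂]
    [DistribMulAction ℂ A₀] [DistribMulAction ℂ A₁] [DistribMulAction ℂ A₂]
    [Star A₀] [Star A₁] [Star A₂]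
    (ι : A₀ →⋆ₙₐ[ℂ] A₁) (π : A₁ →⋆ₙₐ[ℂ] A₂) : Prop :=
  Function.Injective ι ∧ Function.Surjective π ∧ Set.range ι = {b | π b = 0}

/-- A covariant functor from (non-unital) C*-algebras to abelian groups. -/
structure AbFunctor where
  obj : (A : Type) → [NonUnitalCStarAlgebra A] → Type
  grp : (A : Type) → [NonUnitalCStarAlgebra A] → AddCommGroup (obj A)
  map : {A B : Type} → [NonUnitalCStarAlgebra A] → [NonUnitalCStarAlgebra B] →
    (A →⋆ₙₐ[ℂ] B) → obj A → obj B
  map_add : ∀ {A B : Type} [NonUnitalCStarAlgebra A] [NonUnitalCStarAlgebra B]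
    (φ : A →⋆ₙₐ[ℂ] B) (x y : obj A),
      letI := grp A
      letI := grp B
      map φ (x + y) = map φ x + map φ y
  map_id : ∀ {A : Type} [NonUnitalCStarAlgebra A] (φ : A →⋆ₙₐ[ℂ] A),
    (∀ a, φ a = a) → ∀ x, map φ x = x
  map_comp : ∀ {A B C : Type} [NonUnitalCStarAlgebra A] [NonUnitalCStarAlgebra B]
    [NonUnitalCStarAlgebra C] (φ : A →⋆ₙₐ[ℂ] B) (ψ : B →⋆ₙₐ[ℂ] C) (x : obj A),
      map (ψ.comp φ) x = map ψ (map φ x)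

attribute [instance] AbFunctor.grp

/-- The first coordinate projection as a *-homomorphism. -/
def fstHom (A B : Type*) [NonUnitalCStarAlgebra A] [NonUnitalCStarAlgebra B] :
    (A × B) →⋆ₙₐ[ℂ] A where
  toFun := Prod.fst
  map_smul' _ _ := rfl
  map_zero' := rfl
  map_add' _ _ := rfl
  map_mul' _ _ := rfl
  map_star' _ := rfl

/-- The second coordinate projection as a *-homomorphism. -/
def sndHom (A B : Type*) [NonUnitalCStarAlgebra A] [NonUnitalCStarAlgebra B] :
    (A × B) →⋆ₙₐ[ℂ] B where
  toFun := Prod.snd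
  map_smul' _ _ := rfl
  map_zero' := rfl
  map_add' _ _ := rfl
  map_mul' _ _ := rfl
  map_star' _ := rfl

/-- Additivity: `F(A ⊕ B) ≅ F(A) × F(B)` via the coordinate projections. -/
def AbFunctor.Additive (F : AbFunctor) : Prop :=
  ∀ (A B : Type) [NonUnitalCStarAlgebra A] [NonUnitalCStarAlgebra B],
    Function.Bijective fun x : F.obj (A × B) => (F.map (fstHom A B) x, F.map (sndHom A B) x)

/-- Homotopy invariance. -/
def AbFunctor.HomotopyInvariant (F : AbFunctor) : Prop :=
  ∀ (A B : Type) [NonUnitalCStarAlgebra A] [NonUnitalCStarAlgebra B] (φ ψ : A →⋆ₙₐ[ℂ] B),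
    (∃ Φ : A →⋆ₙₐ[ℂ] C(I, B), (∀ a, Φ a 0 = φ a) ∧ (∀ a, Φ a 1 = ψ a)) →
    ∀ x, F.map φ x = F.map ψ x

/-- Half-exactness. -/
def AbFunctor.HalfExact (F : AbFunctor) : Prop :=
  ∀ (A₀ A₁ A₂ : Type) [NonUnitalCStarAlgebra A₀] [NonUnitalCStarAlgebra A₁]
    [NonUnitalCStarAlgebra A₂] (ι : A₀ →⋆ₙₐ[ℂ] A₁) (π : A₁ →⋆ₙₐ[ℂ] A₂),
    IsShortExact ι π → ∀ y : F.obj A₁, (∃ x, F.map ι x = y) ↔ F.map π y = 0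


/-!
Apply `F` to the mapping-cylinder extension `C_ι → Z_ι → A₁` (evaluation at `0`): since `ι`
factors as `A₀ → Z_ι → A₁` with the first map split by the projection `Z_ι → A₀`, every
element of `ker F(ι)` is the image of some `w ∈ F(C_ι)` under the projection `C_ι → A₀`.
When `ι` is the kernel of a split surjection, `C_ι` is itself a split extension of `SA₂` by
the cone `CA₀`. The cone is contractible, so `F(CA₀) = 0` and `w` comes from `F(SA₂)` through
the section `SA₂ → C_ι`, whose composite with the projection to `A₀` is zero. Hence
`ker F(ι) = 0`; the remaining claims are functoriality and half-exactness.
-/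

lemma IsShortExact.apply_apply_eq_zero {A₀ A₁ A₂ : Type*} [NonUnitalCStarAlgebra A₀]
    [NonUnitalCStarAlgebra A₁] [NonUnitalCStarAlgebra A₂] {ι : A₀ →⋆ₙₐ[ℂ] A₁}
    {π : A₁ →⋆ₙₐ[ℂ] A₂} (he : IsShortExact ι π) (a : A₀) : π (ι a) = 0 :=
  he.2.2.subset ⟨a, rfl⟩

namespace AbFunctor

variable (F : AbFunctor) {A₀ A₁ A₂ : Type} [NonUnitalCStarAlgebra A₀]
  [NonUnitalCStarAlgebra A₁] [NonUnitalCStarAlgebra A₂]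

def mapAddHom (φ : A₀ →⋆ₙₐ[ℂ] A₁) : F.obj A₀ →+ F.obj A₁ :=
  AddMonoidHom.mk' (F.map φ) (F.map_add φ)

lemma map_zero (φ : A₀ →⋆ₙₐ[ℂ] A₁) : F.map φ 0 = 0 :=
  (F.mapAddHom φ).map_zero

lemma map_sub (φ : A₀ →⋆ₙₐ[ℂ] A₁) (x y : F.obj A₀) :
    F.map φ (x - y) = F.map φ x - F.map φ y :=
  (F.mapAddHom φ).map_sub x y

lemma map_map_of_comp {φ : A₀ →⋆ₙₐ[ℂ] A₁} {ψ : A₁ →⋆ₙₐ[ℂ] A₂} {χ : A₀ →⋆ₙₐ[ℂ] A₂}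
    (h : ∀ a, ψ (φ a) = χ a) (x : F.obj A₀) : F.map ψ (F.map φ x) = F.map χ x := by
  rw [← F.map_comp, show ψ.comp φ = χ from NonUnitalStarAlgHom.ext h]

lemma map_map_of_leftInverse {φ : A₀ →⋆ₙₐ[ℂ] A₁} {ψ : A₁ →⋆ₙₐ[ℂ] A₀}
    (h : ∀ a, ψ (φ a) = a) (x : F.obj A₀) : F.map ψ (F.map φ x) = x := by
  rw [← F.map_comp]
  exact F.map_id _ h x

lemma subsingleton_obj (hAdd : F.Additive) (D : Type) [NonUnitalCStarAlgebra D]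
    [Subsingleton D] : Subsingleton (F.obj D) := by
  refine ⟨fun u v => ?_⟩
  obtain ⟨x, hx⟩ := (hAdd D D).2 (u, v)
  have hfst : fstHom D D = sndHom D D := NonUnitalStarAlgHom.ext fun _ => Subsingleton.elim _ _
  simp only [Prod.ext_iff, hfst] at hx
  exact hx.1.symm.trans hx.2

lemma map_zeroHom (hAdd : F.Additive) (x : F.obj A₀) :
    F.map (0 : A₀ →⋆ₙₐ[ℂ] A₁) x = 0 := by
  have := F.subsingleton_obj hAdd (Empty → ℂ)
  rw [← F.map_map_of_comp (φ := (0 : A₀ →⋆ₙₐ[ℂ] (Empty → ℂ))) (ψ := 0) (fun _ => rfl),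
    Subsingleton.elim (F.map 0 x) 0, F.map_zero]

end AbFunctor

def coneContraction (A : Type*) [NonUnitalCStarAlgebra A] :
    ↥(cone A) →⋆ₙₐ[ℂ] C(I, ↥(cone A)) where
  toFun f :=
    ⟨fun u =>
      ⟨ContinuousMap.curry ((f : C(I, A)).comp ⟨fun p => p.1 * p.2, continuous_mul⟩) u,
        show (f : C(I, A)) (u * 0) = 0 by rw [mul_zero]; exact f.2⟩,
      (ContinuousMap.curry _).continuous.subtype_mk _⟩
  map_smul' _ _ := rfl
  map_zero' := rfl
  map_add' _ _ := rfl
  map_mul' _ _ := rfl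
  map_star' _ := rfl

lemma coneContraction_apply_apply {A : Type*} [NonUnitalCStarAlgebra A] (f : ↥(cone A))
    (u t : I) : (coneContraction A f u : C(I, A)) t = (f : C(I, A)) (u * t) := rfl

lemma AbFunctor.subsingleton_obj_cone (F : AbFunctor) (hAdd : F.Additive)
    (hHtpy : F.HomotopyInvariant) (A : Type) [NonUnitalCStarAlgebra A] :
    Subsingleton (F.obj ↥(cone A)) := by
  refine subsingleton_of_forall_eq 0 fun x => ?_
  have hzero : ∀ f, coneContraction A f 0 = 0 := fun f =>
    Subtype.ext <| ContinuousMap.ext fun t => by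
      rw [coneContraction_apply_apply, zero_mul]; exact f.2
  have hid : ∀ f, coneContraction A f 1 = NonUnitalStarAlgHom.id ℂ _ f := fun f =>
    Subtype.ext (ContinuousMap.ext fun t => by rw [coneContraction_apply_apply, one_mul]; rfl)
  rw [← F.map_id (NonUnitalStarAlgHom.id ℂ _) (fun _ => rfl) x,
    ← hHtpy _ _ 0 _ ⟨coneContraction A, hzero, hid⟩ x, F.map_zeroHom hAdd]

def mapCyl (φ : A →⋆ₙₐ[ℂ] B) : NonUnitalStarSubalgebra ℂ (A × C(I, B)) where
  carrier := {p | φ p.1 = p.2 1}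
  add_mem' := by intro p q hp hq; simp_all
  zero_mem' := by simp
  mul_mem' := by intro p q hp hq; simp_all
  smul_mem' := by intro c p hp; simp_all
  star_mem' := by intro p hp; simp_all [map_star]

instance mapCyl.isClosed (φ : A →⋆ₙₐ[ℂ] B) : IsClosed ((mapCyl φ : Set (A × C(I, B)))) :=
  isClosed_eq ((map_continuous φ).comp continuous_fst)
    ((continuous_eval_const 1).comp continuous_snd)

def mapConeToMapCyl (φ : A →⋆ₙₐ[ℂ] B) : ↥(mapCone φ) →⋆ₙₐ[ℂ] ↥(mapCyl φ) where
  toFun p := ⟨p, p.2.2⟩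
  map_smul' _ _ := rfl
  map_zero' := rfl
  map_add' _ _ := rfl
  map_mul' _ _ := rfl
  map_star' _ := rfl

def mapCylEvalZero (φ : A →⋆ₙₐ[ℂ] B) : ↥(mapCyl φ) →⋆ₙₐ[ℂ] B where
  toFun p := (p : A × C(I, B)).2 0
  map_smul' _ _ := rfl
  map_zero' := rfl
  map_add' _ _ := rfl
  map_mul' _ _ := rfl
  map_star' _ := rfl

def mapCylFst (φ : A →⋆ₙₐ[ℂ] B) : ↥(mapCyl φ) →⋆ₙₐ[ℂ] A where
  toFun p := (p : A × C(I, B)).1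
  map_smul' _ _ := rfl
  map_zero' := rfl
  map_add' _ _ := rfl
  map_mul' _ _ := rfl
  map_star' _ := rfl

def toMapCyl (φ : A →⋆ₙₐ[ℂ] B) : A →⋆ₙₐ[ℂ] ↥(mapCyl φ) where
  toFun a := ⟨(a, ContinuousMap.const I (φ a)), rfl⟩
  map_smul' c a := Subtype.ext (Prod.ext rfl (ContinuousMap.ext fun _ => map_smul φ c a))
  map_zero' := Subtype.ext (Prod.ext rfl (ContinuousMap.ext fun _ => map_zero φ))
  map_add' a b := Subtype.ext (Prod.ext rfl (ContinuousMap.ext fun _ => map_add φ a b))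
  map_mul' a b := Subtype.ext (Prod.ext rfl (ContinuousMap.ext fun _ => map_mul φ a b))
  map_star' a := Subtype.ext (Prod.ext rfl (ContinuousMap.ext fun _ => map_star φ a))

lemma isShortExact_mapConeToMapCyl (φ : A →⋆ₙₐ[ℂ] B) :
    IsShortExact (mapConeToMapCyl φ) (mapCylEvalZero φ) := by
  refine ⟨fun p q h => Subtype.ext (congrArg (fun r : ↥(mapCyl φ) => (r : A × C(I, B))) h),
    fun b => ?_, ?_⟩
  · refine ⟨⟨(0, ⟨fun t => ((1 - (t : ℝ) : ℝ) : ℂ) • b, by fun_prop⟩), ?_⟩, ?_⟩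
    · show φ 0 = ((1 - ((1 : I) : ℝ) : ℝ) : ℂ) • b
      simp
    · show ((1 - ((0 : I) : ℝ) : ℝ) : ℂ) • b = b
      simp
  · ext p
    exact ⟨by rintro ⟨w, rfl⟩; exact w.2.1, fun hp => ⟨⟨p, hp, p.2⟩, rfl⟩⟩

lemma _root_.NonUnitalStarAlgHom.exists_continuousMap_lift {X : Type*} [TopologicalSpace X]
    (φ : A →⋆ₙₐ[ℂ] B) (hφ : Function.Injective φ) (g : C(X, B))
    (hg : ∀ x, g x ∈ Set.range φ) : ∃ k : C(X, A), ∀ x, φ (k x) = g x := by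
  choose k hk using hg
  have hcont : Continuous k :=
    (NonUnitalStarAlgHom.isometry φ hφ).isEmbedding.continuous_iff.mpr
      (by simpa only [Function.comp_def, hk] using g.continuous)
  exact ⟨⟨k, hcont⟩, hk⟩

section SplitExtension

variable {C : Type*} [NonUnitalCStarAlgebra C]

def coneToMapCone (φ : A →⋆ₙₐ[ℂ] B) : ↥(cone A) →⋆ₙₐ[ℂ] ↥(mapCone φ) where
  toFun k := ⟨((k : C(I, A)) 1, (⟨φ, map_continuous φ⟩ : C(A, B)).comp k),
    show φ ((k : C(I, A)) 0) = 0 by rw [k.2, map_zero], rfl⟩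
  map_smul' c k := Subtype.ext (Prod.ext rfl (ContinuousMap.ext fun _ => map_smul φ c _))
  map_zero' := Subtype.ext (Prod.ext rfl (ContinuousMap.ext fun _ => map_zero φ))
  map_add' k l := Subtype.ext (Prod.ext rfl (ContinuousMap.ext fun _ => map_add φ _ _))
  map_mul' k l := Subtype.ext (Prod.ext rfl (ContinuousMap.ext fun _ => map_mul φ _ _))
  map_star' k := Subtype.ext (Prod.ext rfl (ContinuousMap.ext fun _ => map_star φ _))

def mapConeToSusp (φ : A →⋆ₙₐ[ℂ] B) (π : B →⋆ₙₐ[ℂ] C) (hπφ : ∀ a, π (φ a) = 0) :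
    ↥(mapCone φ) →⋆ₙₐ[ℂ] ↥(susp C) where
  toFun p := ⟨(⟨π, map_continuous π⟩ : C(B, C)).comp (p : A × C(I, B)).2,
    show π ((p : A × C(I, B)).2 0) = 0 by rw [p.2.1, map_zero],
    show π ((p : A × C(I, B)).2 1) = 0 by rw [← p.2.2, hπφ]⟩
  map_smul' c p := Subtype.ext (ContinuousMap.ext fun _ => map_smul π c _)
  map_zero' := Subtype.ext (ContinuousMap.ext fun _ => map_zero π)
  map_add' p q := Subtype.ext (ContinuousMap.ext fun _ => map_add π _ _)
  map_mul' p q := Subtype.ext (ContinuousMap.ext fun _ => map_mul π _ _)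
  map_star' p := Subtype.ext (ContinuousMap.ext fun _ => map_star π _)

def suspToMapCone (φ : A →⋆ₙₐ[ℂ] B) (s : C →⋆ₙₐ[ℂ] B) : ↥(susp C) →⋆ₙₐ[ℂ] ↥(mapCone φ) where
  toFun h := ⟨(0, (⟨s, map_continuous s⟩ : C(C, B)).comp h),
    show s ((h : C(I, C)) 0) = 0 by rw [h.2.1, map_zero],
    show φ 0 = s ((h : C(I, C)) 1) by rw [h.2.2, map_zero, map_zero]⟩
  map_smul' c h := Subtype.ext (Prod.ext (smul_zero c).symm
    (ContinuousMap.ext fun _ => map_smul s c _))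
  map_zero' := Subtype.ext (Prod.ext rfl (ContinuousMap.ext fun _ => map_zero s))
  map_add' h l := Subtype.ext (Prod.ext (add_zero 0).symm
    (ContinuousMap.ext fun _ => map_add s _ _))
  map_mul' h l := Subtype.ext (Prod.ext (mul_zero 0).symm
    (ContinuousMap.ext fun _ => map_mul s _ _))
  map_star' h := Subtype.ext (Prod.ext (star_zero _).symm
    (ContinuousMap.ext fun _ => map_star s _))

lemma mapConeToSusp_suspToMapCone {φ : A →⋆ₙₐ[ℂ] B} {π : B →⋆ₙₐ[ℂ] C}
    {hπφ : ∀ a, π (φ a) = 0} {s : C →⋆ₙₐ[ℂ] B} (hs : ∀ c, π (s c) = c) (h : ↥(susp C)) :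
    mapConeToSusp φ π hπφ (suspToMapCone φ s h) = h :=
  Subtype.ext (ContinuousMap.ext fun _ => hs _)

lemma isShortExact_coneToMapCone {φ : A →⋆ₙₐ[ℂ] B} {π : B →⋆ₙₐ[ℂ] C}
    (he : IsShortExact φ π) {s : C →⋆ₙₐ[ℂ] B} (hs : ∀ c, π (s c) = c) :
    IsShortExact (coneToMapCone φ) (mapConeToSusp φ π he.apply_apply_eq_zero) := by
  have hφ : Function.Injective φ := he.1
  refine ⟨fun k l h => ?_, fun h => ⟨suspToMapCone φ s h, mapConeToSusp_suspToMapCone hs h⟩, ?_⟩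
  · exact Subtype.ext (ContinuousMap.ext fun t => hφ
      (ContinuousMap.congr_fun (congrArg (fun p : ↥(mapCone φ) => (p : A × C(I, B)).2) h) t))
  · ext p
    refine ⟨?_, fun hp => ?_⟩
    · rintro ⟨k, rfl⟩
      exact Subtype.ext (ContinuousMap.ext fun _ => he.apply_apply_eq_zero _)
    · have hmem : ∀ t, (p : A × C(I, B)).2 t ∈ Set.range φ := fun t =>
        he.2.2 ▸ ContinuousMap.congr_fun (congrArg Subtype.val hp) t
      obtain ⟨k, hk⟩ := φ.exists_continuousMap_lift hφ _ hmem
      refine ⟨⟨k, hφ (by rw [hk, p.2.1, map_zero])⟩, Subtype.ext (Prod.ext ?_ ?_)⟩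
      · exact hφ ((hk 1).trans p.2.2.symm)
      · exact ContinuousMap.ext hk

end SplitExtension

namespace AbFunctor

variable (F : AbFunctor) {A₀ A₁ A₂ : Type} [NonUnitalCStarAlgebra A₀]
  [NonUnitalCStarAlgebra A₁] [NonUnitalCStarAlgebra A₂]

lemma exists_map_add_map_of_split (hHX : F.HalfExact) {ι : A₀ →⋆ₙₐ[ℂ] A₁}
    {π : A₁ →⋆ₙₐ[ℂ] A₂} (he : IsShortExact ι π) {s : A₂ →⋆ₙₐ[ℂ] A₁}
    (hs : ∀ c, π (s c) = c) (y : F.obj A₁) :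
    ∃ u, F.map ι u + F.map s (F.map π y) = y := by
  obtain ⟨u, hu⟩ := (hHX _ _ _ ι π he (y - F.map s (F.map π y))).mpr
    (by rw [F.map_sub, F.map_map_of_leftInverse hs, sub_self])
  exact ⟨u, by rw [hu, sub_add_cancel]⟩

lemma exists_map_mapConeProj_eq (hHX : F.HalfExact) (φ : A₀ →⋆ₙₐ[ℂ] A₁) {x : F.obj A₀}
    (hx : F.map φ x = 0) : ∃ w, F.map (mapConeProj φ) w = x := by
  obtain ⟨w, hw⟩ := (hHX _ _ _ _ _ (isShortExact_mapConeToMapCyl φ) (F.map (toMapCyl φ) x)).mpr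
    (by rw [F.map_map_of_comp (χ := φ) fun _ => rfl, hx])
  refine ⟨w, ?_⟩
  rw [← F.map_map_of_comp (φ := mapConeToMapCyl φ) (ψ := mapCylFst φ) (fun _ => rfl), hw,
    F.map_map_of_leftInverse fun _ => rfl]

lemma map_mapConeProj_eq_zero_of_split (hAdd : F.Additive) (hHtpy : F.HomotopyInvariant)
    (hHX : F.HalfExact) {ι : A₀ →⋆ₙₐ[ℂ] A₁} {π : A₁ →⋆ₙₐ[ℂ] A₂} (he : IsShortExact ι π)
    {s : A₂ →⋆ₙₐ[ℂ] A₁} (hs : ∀ c, π (s c) = c) (w : F.obj ↥(mapCone ι)) :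
    F.map (mapConeProj ι) w = 0 := by
  obtain ⟨u, hu⟩ := F.exists_map_add_map_of_split hHX (isShortExact_coneToMapCone he hs)
    (mapConeToSusp_suspToMapCone hs) w
  have := F.subsingleton_obj_cone hAdd hHtpy A₀
  rw [← hu, Subsingleton.elim u 0, F.map_zero, zero_add,
    F.map_map_of_comp (χ := 0) fun _ => rfl, F.map_zeroHom hAdd]

end AbFunctor

/-- An additive, homotopy invariant, half-exact covariant functor is
split-exact. -/
theorem statement5 (F : AbFunctor)
    (hAdd : F.Additive) (hHtpy : F.HomotopyInvariant) (hHX : F.HalfExact)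
    (A₀ A₁ A₂ : Type) [NonUnitalCStarAlgebra A₀] [NonUnitalCStarAlgebra A₁]
    [NonUnitalCStarAlgebra A₂]
    (ι : A₀ →⋆ₙₐ[ℂ] A₁) (π : A₁ →⋆ₙₐ[ℂ] A₂) (he : IsShortExact ι π)
    (s : A₂ →⋆ₙₐ[ℂ] A₁) (hs : ∀ x, π (s x) = x) :
    Function.Injective (F.map ι) ∧
    Function.Surjective (F.map π) ∧
    Set.range (F.map ι) = {y | F.map π y = 0} ∧
    ∀ z, F.map π (F.map s z) = z := by
  have hsplit : ∀ z, F.map π (F.map s z) = z := F.map_map_of_leftInverse hs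
  refine ⟨?_, fun z => ⟨F.map s z, hsplit z⟩, Set.ext fun y => hHX A₀ A₁ A₂ ι π he y, hsplit⟩
  refine (injective_iff_map_eq_zero (F.mapAddHom ι)).2 fun x hx => ?_
  obtain ⟨w, rfl⟩ := F.exists_map_mapConeProj_eq hHX ι hx
  exact F.map_mapConeProj_eq_zero_of_split hAdd hHtpy hHX he hs w

end CStarPaper
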